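/- arXiv:0909.0217 — 6 statements merged into one kernel-verified Lean document; each statement's English description precedes it below -/
import Mathlib

section
/- Let n ≥ 1 and let f : ℝⁿ → ℝⁿ be continuous and satisfy the growth condition with constant R' > 0. Then the escaping set I(f) is an open subset of ℝⁿ. -/
open Filter Metric Set

/-- The escaping set `I(f)` of a map `f : ℝⁿ → ℝⁿ`:
points whose orbit under iteration tends to infinity. -/
def escapingSet {n : ℕ} (f : EuclideanSpace ℝ (Fin n) → EuclideanSpace ℝ (Fin n)) :
    Set (EuclideanSpace ℝ (Fin n)) :=
  {x | Tendsto (fun k => ‖f^[k] x‖) atTop atTop}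

/-- `f` satisfies the growth condition with constant `R' > 0` if
`‖f x‖ > 2‖x‖` whenever `‖x‖ > R'`. -/
def GrowthCondition {n : ℕ} (f : EuclideanSpace ℝ (Fin n) → EuclideanSpace ℝ (Fin n))
    (R' : ℝ) : Prop :=
  ∀ x, R' < ‖x‖ → 2 * ‖x‖ < ‖f x‖

/-! Once an orbit leaves the ball of radius `R`, where `f` expands norms by a factor `c > 1`,
it grows geometrically, so the escaping set is the union over `k` of the preimages under `f^[k]`
of the open set `{R < ‖y‖}`, which is open when `f` is continuous. -/

section Escape

variable {E : Type*} [SeminormedAddGroup E] {f : E → E} {R c : ℝ}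

theorem pow_mul_norm_le_norm_iterate (hc : 1 ≤ c)
    (hgrow : ∀ x, R < ‖x‖ → c * ‖x‖ < ‖f x‖) {y : E} (hy : R < ‖y‖) (m : ℕ) :
    c ^ m * ‖y‖ ≤ ‖f^[m] y‖ := by
  induction m with
  | zero => simp
  | succ m ih =>
    have hy_le : ‖y‖ ≤ c ^ m * ‖y‖ := le_mul_of_one_le_left (norm_nonneg y) (one_le_pow₀ hc)
    have hfar : R < ‖f^[m] y‖ := hy.trans_le (hy_le.trans ih)
    calc c ^ (m + 1) * ‖y‖ = c * (c ^ m * ‖y‖) := by ring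
      _ ≤ c * ‖f^[m] y‖ := mul_le_mul_of_nonneg_left ih (by linarith)
      _ ≤ ‖f^[m + 1] y‖ := by
        rw [Function.iterate_succ_apply']
        exact (hgrow _ hfar).le

theorem tendsto_norm_iterate_of_lt_norm (hR : 0 ≤ R) (hc : 1 < c)
    (hgrow : ∀ x, R < ‖x‖ → c * ‖x‖ < ‖f x‖) {y : E} (hy : R < ‖y‖) :
    Tendsto (fun m => ‖f^[m] y‖) atTop atTop :=
  tendsto_atTop_mono (pow_mul_norm_le_norm_iterate hc.le hgrow hy)
    ((tendsto_pow_atTop_atTop_of_one_lt hc).atTop_mul_const (hR.trans_lt hy))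

theorem setOf_tendsto_norm_iterate_eq_iUnion (hR : 0 ≤ R) (hc : 1 < c)
    (hgrow : ∀ x, R < ‖x‖ → c * ‖x‖ < ‖f x‖) :
    {x | Tendsto (fun k => ‖f^[k] x‖) atTop atTop} = ⋃ k, f^[k] ⁻¹' {y | R < ‖y‖} := by
  ext x
  simp only [mem_ofPred_eq, mem_iUnion, mem_preimage]
  constructor
  · exact fun hx => (hx.eventually_gt_atTop R).exists
  · rintro ⟨k, hk⟩
    have htail := tendsto_norm_iterate_of_lt_norm hR hc hgrow hk
    simp only [← Function.iterate_add_apply] at htail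
    exact (tendsto_add_atTop_iff_nat k).mp htail

theorem isOpen_setOf_tendsto_norm_iterate (hf : Continuous f) (hR : 0 ≤ R) (hc : 1 < c)
    (hgrow : ∀ x, R < ‖x‖ → c * ‖x‖ < ‖f x‖) :
    IsOpen {x | Tendsto (fun k => ‖f^[k] x‖) atTop atTop} := by
  rw [setOf_tendsto_norm_iterate_eq_iUnion hR hc hgrow]
  exact isOpen_iUnion fun k =>
    (isOpen_lt continuous_const continuous_norm).preimage (hf.iterate k)

end Escape

theorem stmt_2_general (n : ℕ)
    (f : EuclideanSpace ℝ (Fin n) → EuclideanSpace ℝ (Fin n)) (hf : Continuous f)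
    (R' : ℝ) (hgrow : GrowthCondition f R') :
    IsOpen (escapingSet f) :=
  isOpen_setOf_tendsto_norm_iterate hf (le_max_right R' 0) one_lt_two
    fun x hx => hgrow x ((le_max_left R' 0).trans_lt hx)

theorem stmt_2 (n : ℕ) (hn : 1 ≤ n)
    (f : EuclideanSpace ℝ (Fin n) → EuclideanSpace ℝ (Fin n)) (hf : Continuous f)
    (R' : ℝ) (hR' : 0 < R') (hgrow : GrowthCondition f R') :
    IsOpen (escapingSet f) :=
  stmt_2_general n f hf R' hgrow
end

section
/- Let n ≥ 1 and let f : ℝⁿ → ℝⁿ be continuous and satisfy the growth condition with constant R' > 0. Then the boundary ∂I(f) of the escaping set is contained in the closed ball of radius R' about the origin; in particular ∂I(f) is bounded. -/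
/-!
Outside the closed ball of radius `R'` the growth condition at least doubles the norm at every
step, so the orbit stays outside the ball and grows geometrically. Hence the open complement of
the ball lies in the interior of `I(f)`, and the frontier of `I(f)` cannot meet it.
-/

open Filter Metric Set

namespace GrowthCondition

variable {n : ℕ} {f : EuclideanSpace ℝ (Fin n) → EuclideanSpace ℝ (Fin n)} {R' : ℝ}

theorem lt_norm_iterate (hgrow : GrowthCondition f R') {x : EuclideanSpace ℝ (Fin n)}
    (hx : R' < ‖x‖) (k : ℕ) : R' < ‖f^[k] x‖ := by
  induction k with
  | zero => exact hx
  | succ k ih =>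
    rw [Function.iterate_succ_apply']
    linarith [hgrow _ ih, norm_nonneg (f^[k] x)]

theorem mem_escapingSet (hgrow : GrowthCondition f R') {x : EuclideanSpace ℝ (Fin n)}
    (hx : R' < ‖x‖) : x ∈ escapingSet f := by
  have hdouble : ∀ k, 2 * ‖f^[k] x‖ < ‖f^[k + 1] x‖ := fun k => by
    rw [Function.iterate_succ_apply']
    exact hgrow _ (hgrow.lt_norm_iterate hx k)
  -- `x` itself may be `0`; the doubling makes the norms positive from `k = 1` on.
  have hpos : 0 < ‖f^[1] x‖ := by linarith [hdouble 0, norm_nonneg (f^[0] x)]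
  refine (tendsto_add_atTop_iff_nat 1).mp (tendsto_atTop_of_geom_le hpos one_lt_two fun k => ?_)
  exact (hdouble (k + 1)).le

theorem closedBall_compl_subset_interior_escapingSet (hgrow : GrowthCondition f R') :
    (closedBall 0 R')ᶜ ⊆ interior (escapingSet f) :=
  interior_maximal (fun x hx => hgrow.mem_escapingSet (by simpa using hx))
    isClosed_closedBall.isOpen_compl

end GrowthCondition

theorem stmt_4_general (n : ℕ)
    (f : EuclideanSpace ℝ (Fin n) → EuclideanSpace ℝ (Fin n))
    (R' : ℝ) (hgrow : GrowthCondition f R') :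
    frontier (escapingSet f) ⊆ Metric.closedBall (0 : EuclideanSpace ℝ (Fin n)) R' := by
  intro x hx
  by_contra hball
  exact hx.2 (hgrow.closedBall_compl_subset_interior_escapingSet hball)

theorem stmt_4 (n : ℕ) (hn : 1 ≤ n)
    (f : EuclideanSpace ℝ (Fin n) → EuclideanSpace ℝ (Fin n)) (hf : Continuous f)
    (R' : ℝ) (hR' : 0 < R') (hgrow : GrowthCondition f R') :
    frontier (escapingSet f) ⊆ Metric.closedBall (0 : EuclideanSpace ℝ (Fin n)) R' :=
  stmt_4_general n f R' hgrow
end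

section
/- Let n ≥ 1 and let f : ℝⁿ → ℝⁿ be continuous and satisfy the growth condition with constant R' > 0. If V is a compact subset of the escaping set I(f), then there exists N ∈ ℕ such that for every k ≥ 0 and every x ∈ V one has ‖f^{N+k}(x)‖ > 2^k R'. In particular the iterates f^k tend to infinity uniformly on V. -/
/-
The region `{y | R' < ‖y‖}` is open and forward invariant, and every point of `V` eventually
enters it. Its preimages under the iterates of `f` are therefore open and increasing, so by
compactness a single one of them covers `V`: after `N` steps all of `V` lies beyond `R'`,
and from there on every further step more than doubles the norm.
-/

open Filter Metric Set

theorem Set.MapsTo.monotone_preimage_iterate {α : Type*} {f : α → α} {U : Set α}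
    (hfU : MapsTo f U U) : Monotone fun m => f^[m] ⁻¹' U := by
  intro m m' hmm' x hx
  obtain ⟨d, rfl⟩ := Nat.exists_eq_add_of_le hmm'
  simpa only [mem_preimage, add_comm m d, Function.iterate_add_apply] using hfU.iterate d hx

theorem IsCompact.exists_iterate_mapsTo {X : Type*} [TopologicalSpace X] {f : X → X}
    (hf : Continuous f) {U V : Set X} (hU : IsOpen U) (hfU : MapsTo f U U) (hV : IsCompact V)
    (hVU : ∀ x ∈ V, ∃ m, f^[m] x ∈ U) : ∃ N, MapsTo f^[N] V U :=
  hV.elim_directed_cover (fun m => f^[m] ⁻¹' U) (fun m => hU.preimage (hf.iterate m))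
    (fun x hx => mem_iUnion.2 (hVU x hx)) hfU.monotone_preimage_iterate.directed_le

section Growth

variable {E : Type*} [SeminormedAddCommGroup E] {f : E → E} {R : ℝ}

theorem mapsTo_norm_gt_of_growth (hgrow : ∀ y, R < ‖y‖ → 2 * ‖y‖ < ‖f y‖) :
    MapsTo f {y | R < ‖y‖} {y | R < ‖y‖} := fun y (hy : R < ‖y‖) =>
  show R < ‖f y‖ by linarith [hgrow y hy, norm_nonneg y]

theorem pow_two_mul_norm_le_norm_iterate_of_growth
    (hgrow : ∀ y, R < ‖y‖ → 2 * ‖y‖ < ‖f y‖) {x : E} (hx : R < ‖x‖) (m : ℕ) :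
    2 ^ m * ‖x‖ ≤ ‖f^[m] x‖ := by
  induction m with
  | zero => simp
  | succ m ih =>
    have hfm : R < ‖f^[m] x‖ := (mapsTo_norm_gt_of_growth hgrow).iterate m hx
    rw [Function.iterate_succ_apply']
    calc 2 ^ (m + 1) * ‖x‖ = 2 * (2 ^ m * ‖x‖) := by ring
      _ ≤ 2 * ‖f^[m] x‖ := by gcongr
      _ ≤ ‖f (f^[m] x)‖ := (hgrow _ hfm).le

end Growth

theorem stmt_5_general (n : ℕ)
    (f : EuclideanSpace ℝ (Fin n) → EuclideanSpace ℝ (Fin n)) (hf : Continuous f)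
    (R' : ℝ) (hgrow : GrowthCondition f R')
    (V : Set (EuclideanSpace ℝ (Fin n))) (hVc : IsCompact V) (hV : V ⊆ escapingSet f) :
    ∃ N : ℕ, ∀ k : ℕ, ∀ x ∈ V, 2 ^ k * R' < ‖f^[N + k] x‖ := by
  obtain ⟨N, hN⟩ := hVc.exists_iterate_mapsTo hf (isOpen_lt continuous_const continuous_norm)
    (mapsTo_norm_gt_of_growth hgrow) fun x hx => ((hV hx).eventually_gt_atTop R').exists
  refine ⟨N, fun k x hx => ?_⟩
  have hxN : R' < ‖f^[N] x‖ := hN hx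
  calc 2 ^ k * R' < 2 ^ k * ‖f^[N] x‖ := by gcongr
    _ ≤ ‖f^[k] (f^[N] x)‖ := pow_two_mul_norm_le_norm_iterate_of_growth hgrow hxN k
    _ = ‖f^[N + k] x‖ := by rw [add_comm, Function.iterate_add_apply]

theorem stmt_5 (n : ℕ) (hn : 1 ≤ n)
    (f : EuclideanSpace ℝ (Fin n) → EuclideanSpace ℝ (Fin n)) (hf : Continuous f)
    (R' : ℝ) (hR' : 0 < R') (hgrow : GrowthCondition f R')
    (V : Set (EuclideanSpace ℝ (Fin n))) (hVc : IsCompact V) (hV : V ⊆ escapingSet f) :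
    ∃ N : ℕ, ∀ k : ℕ, ∀ x ∈ V, 2 ^ k * R' < ‖f^[N + k] x‖ :=
  stmt_5_general n f hf R' hgrow V hVc hV
end

section
/- Let n ≥ 1 and let f : ℝⁿ → ℝⁿ be a continuous, open, surjective map. Then the set ℝⁿ \ cl(I(f)), the complement of the closure of the escaping set, is completely invariant: f⁻¹(ℝⁿ \ cl(I(f))) = ℝⁿ \ cl(I(f)). -/
open Filter Metric Set

theorem preimage_escapingSet {n : ℕ} (f : EuclideanSpace ℝ (Fin n) → EuclideanSpace ℝ (Fin n)) :
    f ⁻¹' escapingSet f = escapingSet f := by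
  ext x
  simp only [escapingSet, mem_preimage, mem_ofPred_eq, ← Function.iterate_succ_apply]
  exact tendsto_add_atTop_iff_nat (f := fun k => ‖f^[k] x‖) 1

theorem stmt_9_general (n : ℕ)
    (f : EuclideanSpace ℝ (Fin n) → EuclideanSpace ℝ (Fin n))
    (hf : Continuous f) (hopen : IsOpenMap f) :
    f ⁻¹' (closure (escapingSet f))ᶜ = (closure (escapingSet f))ᶜ := by
  rw [preimage_compl, hopen.preimage_closure_eq_closure_preimage hf, preimage_escapingSet]

theorem stmt_9 (n : ℕ) (hn : 1 ≤ n)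
    (f : EuclideanSpace ℝ (Fin n) → EuclideanSpace ℝ (Fin n))
    (hf : Continuous f) (hopen : IsOpenMap f) (hsurj : Function.Surjective f) :
    f ⁻¹' (closure (escapingSet f))ᶜ = (closure (escapingSet f))ᶜ :=
  stmt_9_general n f hf hopen
end

section
/- Let n ≥ 1 and let f : ℝⁿ → ℝⁿ be continuous, surjective, and satisfy the growth condition with constant R' > 0. Then there exists a point x ∈ ℝⁿ that does not escape, i.e. I(f) ≠ ℝⁿ; consequently the boundary ∂I(f) is non-empty. -/
open Filter Metric Set

theorem stmt_10 (n : ℕ) (hn : 1 ≤ n)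
    (f : EuclideanSpace ℝ (Fin n) → EuclideanSpace ℝ (Fin n))
    (hf : Continuous f) (hsurj : Function.Surjective f)
    (R' : ℝ) (hR' : 0 < R') (hgrow : GrowthCondition f R') :
    escapingSet f ≠ Set.univ ∧ (frontier (escapingSet f)).Nonempty := by
  set B : Set (EuclideanSpace ℝ (Fin n)) := Metric.closedBall 0 R' with hB
  have hmemB : ∀ x : EuclideanSpace ℝ (Fin n), x ∈ B ↔ ‖x‖ ≤ R' := by
    intro x; simp [hB, Metric.mem_closedBall, dist_zero_right]
  -- preimage of B is inside B
  have hpre : f ⁻¹' B ⊆ B := by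
    intro x hx
    rw [Set.mem_preimage, hmemB] at hx
    rw [hmemB]
    by_contra h
    push_neg at h
    have := hgrow x h
    nlinarith [norm_nonneg x]
  -- the nested sequence
  set s : ℕ → Set (EuclideanSpace ℝ (Fin n)) := fun k => f^[k] ⁻¹' B with hs
  have hsub : ∀ k, s (k + 1) ⊆ s k := by
    intro k x hx
    rw [hs, Set.mem_preimage] at hx ⊢
    rw [Function.iterate_succ'] at hx
    exact hpre hx
  have hne : ∀ k, (s k).Nonempty := by
    intro k
    obtain ⟨x, hx⟩ := (hsurj.iterate k) 0
    exact ⟨x, by simp [hs, Set.mem_preimage, hx, hmemB, hR'.le]⟩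
  have hclosed : ∀ k, IsClosed (s k) := fun k =>
    (Metric.isClosed_closedBall).preimage (hf.iterate k)
  have hcpt : IsCompact (s 0) := by
    simpa [hs] using (isCompact_closedBall (0 : EuclideanSpace ℝ (Fin n)) R')
  obtain ⟨x, hx⟩ := IsCompact.nonempty_iInter_of_sequence_nonempty_isCompact_isClosed
    s hsub hne hcpt hclosed
  have hxnot : x ∉ escapingSet f := by
    intro hesc
    have hbound : ∀ k, ‖f^[k] x‖ ≤ R' := by
      intro k
      have := Set.mem_iInter.1 hx k
      rwa [hs, Set.mem_preimage, hmemB] at this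
    obtain ⟨k, hk⟩ := (hesc.eventually_ge_atTop (R' + 1)).exists
    linarith [hbound k]
  have hne_univ : escapingSet f ≠ Set.univ := by
    intro h
    exact hxnot (h ▸ Set.mem_univ x)
  refine ⟨hne_univ, ?_⟩
  -- find an escaping point
  have : Nontrivial (EuclideanSpace ℝ (Fin n)) := by
    have : Nonempty (Fin n) := ⟨⟨0, hn⟩⟩
    infer_instance
  obtain ⟨y, hy⟩ := NormedSpace.exists_lt_norm ℝ (EuclideanSpace ℝ (Fin n)) R'
  have hgeo : ∀ k, 2 ^ k * ‖y‖ ≤ ‖f^[k] y‖ := by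
    intro k
    induction k with
    | zero => simp
    | succ k ih =>
      have hRy : R' < ‖f^[k] y‖ := by
        have h1 : (1 : ℝ) ≤ 2 ^ k := one_le_pow₀ (by norm_num)
        nlinarith [norm_nonneg y]
      have := hgrow _ hRy
      rw [Function.iterate_succ', Function.comp_apply]
      calc 2 ^ (k + 1) * ‖y‖ = 2 * (2 ^ k * ‖y‖) := by ring
        _ ≤ 2 * ‖f^[k] y‖ := by linarith
        _ ≤ ‖f (f^[k] y)‖ := this.le
  have hyesc : y ∈ escapingSet f := by
    have hyp : 0 < ‖y‖ := lt_trans hR' hy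
    have h2 : Tendsto (fun k : ℕ => 2 ^ k * ‖y‖) atTop atTop :=
      Tendsto.atTop_mul_const hyp (tendsto_pow_atTop_atTop_of_one_lt (by norm_num : (1:ℝ) < 2))
    exact tendsto_atTop_mono hgeo h2
  rw [nonempty_frontier_iff]
  exact ⟨⟨y, hyesc⟩, hne_univ⟩
end

section
/- Let n ≥ 1 and let g : ℝⁿ → ℝⁿ be a continuous open map. Let x ∈ ℝⁿ, δ > 0 and S > 0 be such that ‖g(y)‖ > S for every y on the sphere {y : ‖y − x‖ = δ}, while ‖g(x)‖ < S. Then the open ball B(0, S) is contained in g(B(x, δ)). -/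
open Filter Metric Set

/-! The image `U = g(B(x, δ))` is open, and since `g(B̄(x, δ))` is compact the closure of `U`
adds only points of `g(S(x, δ))`. So for a preconnected `V` missing `g(S(x, δ))`, the set
`V ∩ U` is relatively clopen in `V`; if it is nonempty it is all of `V`. -/

section

variable {X Y : Type*} [PseudoMetricSpace X] [ProperSpace X] [TopologicalSpace Y] [T2Space Y]
  {g : X → Y}

theorem closure_image_ball_subset (hg : Continuous g) (x : X) (δ : ℝ) :
    closure (g '' ball x δ) ⊆ g '' ball x δ ∪ g '' sphere x δ := by
  rw [← image_union, ball_union_sphere]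
  exact closure_minimal (image_mono ball_subset_closedBall)
    ((isCompact_closedBall x δ).image hg).isClosed

theorem IsPreconnected.subset_image_ball {V : Set Y} (hV : IsPreconnected V)
    (hg : Continuous g) (hopen : IsOpenMap g) {x : X} {δ : ℝ}
    (hmeet : (V ∩ g '' ball x δ).Nonempty) (hsphere : Disjoint V (g '' sphere x δ)) :
    V ⊆ g '' ball x δ := by
  refine hV.subset_of_closure_inter_subset (hopen _ isOpen_ball) (inter_comm V _ ▸ hmeet) ?_
  rintro z ⟨hz, hzV⟩
  rcases closure_image_ball_subset hg x δ hz with hball | hsph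
  · exact hball
  · exact absurd hsph (hsphere.notMem_of_mem_left hzV)

end

theorem stmt_13_general (n : ℕ)
    (g : EuclideanSpace ℝ (Fin n) → EuclideanSpace ℝ (Fin n))
    (hg : Continuous g) (hopen : IsOpenMap g)
    (x : EuclideanSpace ℝ (Fin n)) (δ S : ℝ) (hδ : 0 < δ)
    (hsphere : ∀ y : EuclideanSpace ℝ (Fin n), ‖y - x‖ = δ → S < ‖g y‖)
    (hx : ‖g x‖ < S) :
    Metric.ball (0 : EuclideanSpace ℝ (Fin n)) S ⊆ g '' Metric.ball x δ := by
  refine (convex_ball 0 S).isPreconnected.subset_image_ball hg hopen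
    ⟨g x, mem_ball_zero_iff.mpr hx, mem_image_of_mem g (mem_ball_self hδ)⟩ ?_
  rw [disjoint_left]
  rintro _ hball ⟨y, hy, rfl⟩
  exact (mem_ball_zero_iff.mp hball).not_gt (hsphere y (mem_sphere_iff_norm.mp hy))

theorem stmt_13 (n : ℕ) (hn : 1 ≤ n)
    (g : EuclideanSpace ℝ (Fin n) → EuclideanSpace ℝ (Fin n))
    (hg : Continuous g) (hopen : IsOpenMap g)
    (x : EuclideanSpace ℝ (Fin n)) (δ S : ℝ) (hδ : 0 < δ) (hS : 0 < S)
    (hsphere : ∀ y : EuclideanSpace ℝ (Fin n), ‖y - x‖ = δ → S < ‖g y‖)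
    (hx : ‖g x‖ < S) :
    Metric.ball (0 : EuclideanSpace ℝ (Fin n)) S ⊆ g '' Metric.ball x δ :=
  stmt_13_general n g hg hopen x δ S hδ hsphere hx
end
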